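/- arXiv:1010.5184 — 2 statements merged into one kernel-verified Lean document; each statement's English description precedes it below -/
import Mathlib

section
/- Let d be a positive integer. If φ ∈ I_d then both φ′ and Dφ (where (Dφ)(x) = x φ′(x)) belong to I_d. -/
open MeasureTheory Set

/-- Membership in the space `I_d`: `φ` is smooth on `ℝ` and the function
`x ↦ x^{-d-1} φ(-1/x)` (defined for `x ≠ 0`) extends to a smooth function on `ℝ`. -/
def MemI (d : ℕ) (φ : ℝ → ℂ) : Prop :=
  ContDiff ℝ (⊤ : ℕ∞) φ ∧
    ∃ ψ : ℝ → ℂ, ContDiff ℝ (⊤ : ℕ∞) ψ ∧ ∀ x : ℝ, x ≠ 0 → ψ x = ((x : ℂ) ^ (d + 1))⁻¹ * φ (-1 / x)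

/-- for a positive integer `d`, if `φ ∈ I_d` then both `φ'` and
`Dφ` (where `(Dφ)(x) = x φ'(x)`) belong to `I_d`. -/
theorem deriv_mem_Id (d : ℕ) (hd : 0 < d) (φ : ℝ → ℂ) (hφ : MemI d φ) :
    MemI d (deriv φ) ∧ MemI d (fun x => (x : ℂ) * deriv φ x) := by
  obtain ⟨hsm, ψ, hψ, hψeq⟩ := hφ
  have hds : ∀ f : ℝ → ℂ, ContDiff ℝ (⊤ : ℕ∞) f → ContDiff ℝ (⊤ : ℕ∞) (deriv f) := by
    intro f hf
    have h1 : ContDiff ℝ (((⊤ : ℕ∞) : WithTop ℕ∞) + 1) f := by exact hf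
    exact (contDiff_succ_iff_deriv.mp h1).2.2
  have hφd : ContDiff ℝ (⊤ : ℕ∞) (deriv φ) := hds φ hsm
  have hψd : ContDiff ℝ (⊤ : ℕ∞) (deriv ψ) := hds ψ hψ
  have hcoe : ContDiff ℝ (⊤ : ℕ∞) (fun x : ℝ => (x : ℂ)) := Complex.ofRealCLM.contDiff
  have key : ∀ x : ℝ, x ≠ 0 →
      (x : ℂ) ^ 2 * deriv ψ x + ((d : ℂ) + 1) * (x : ℂ) * ψ x
        = ((x : ℂ) ^ (d + 1))⁻¹ * deriv φ (-1 / x) := by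
    intro x hx
    have hxC : (x : ℂ) ≠ 0 := Complex.ofReal_ne_zero.mpr hx
    have hpow : (x : ℂ) ^ (d + 1) ≠ 0 := pow_ne_zero _ hxC
    have h1 : HasDerivAt (fun y : ℝ => (((y : ℂ)) ^ (d + 1))⁻¹)
        (-(((d : ℂ) + 1) * (x : ℂ) ^ d) / ((x : ℂ) ^ (d + 1)) ^ 2) x := by
      have h := (((hasDerivAt_pow (d + 1) ((x : ℂ))).inv hpow).comp_ofReal)
      simpa using h
    have hinner : HasDerivAt (fun y : ℝ => -1 / y) ((x ^ 2)⁻¹) x := by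
      have := (hasDerivAt_inv hx).neg
      simpa [neg_div, one_div, Pi.neg_def] using this
    have h2 : HasDerivAt (fun y : ℝ => φ (-1 / y)) ((x ^ 2)⁻¹ • deriv φ (-1 / x)) x := by
      have hφ' : HasDerivAt φ (deriv φ (-1 / x)) (-1 / x) :=
        (hsm.differentiable (by simp) (-1 / x)).hasDerivAt
      exact hφ'.scomp x hinner
    have hF := h1.mul h2
    have heq : ψ =ᶠ[nhds x] fun y : ℝ => (((y : ℂ)) ^ (d + 1))⁻¹ * φ (-1 / y) := by
      filter_upwards [isOpen_ne.mem_nhds hx] with y hy using hψeq y hy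
    have hderiv : deriv ψ x =
        -(((d : ℂ) + 1) * (x : ℂ) ^ d) / ((x : ℂ) ^ (d + 1)) ^ 2 * φ (-1 / x)
          + (((x : ℂ)) ^ (d + 1))⁻¹ * ((x ^ 2)⁻¹ • deriv φ (-1 / x)) :=
      heq.deriv_eq.trans hF.deriv
    rw [hderiv, hψeq x hx]
    rw [Complex.real_smul]
    push_cast
    field_simp
    ring
  refine ⟨⟨hφd, fun x => (x : ℂ) ^ 2 * deriv ψ x + ((d : ℂ) + 1) * (x : ℂ) * ψ x,
      ((hcoe.pow 2).mul hψd).add ((contDiff_const.mul hcoe).mul hψ), key⟩,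
    hcoe.mul hφd, fun x => -((x : ℂ) * deriv ψ x + ((d : ℂ) + 1) * ψ x),
      ((hcoe.mul hψd).add (contDiff_const.mul hψ)).neg, ?_⟩
  · intro x hx
    have hxC : (x : ℂ) ≠ 0 := Complex.ofReal_ne_zero.mpr hx
    have hpow : (x : ℂ) ^ (d + 1) ≠ 0 := pow_ne_zero _ hxC
    have hk := key x hx
    push_cast
    field_simp at hk ⊢
    linear_combination -hk
end

section
/- Let d be a positive integer and f ∈ S̃_d. Then the function y ↦ |y|^{(d−1)/2} f(y) (y ≠ 0) extends to a function on ℝ of class C^{d−1}, i.e. it has d−1 continuous derivatives at y = 0 (for d = 1, it extends continuously). -/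
open MeasureTheory Set
open scoped FourierTransform

/-- The normalized Fourier transform `φ̂(y) = (2π)^{-1/2} ∫_ℝ φ(x) e^{-ixy} dx`. -/
noncomputable def fourierHat (φ : ℝ → ℂ) (y : ℝ) : ℂ :=
  (((2 * Real.pi) ^ (-(1 : ℝ) / 2) : ℝ) : ℂ) * ∫ x : ℝ, φ x * Complex.exp (-(Complex.I * x * y))

/-- The operator `M_d(φ)(y) = |y|^{(1-d)/2} φ̂(y)`. -/
noncomputable def Md (d : ℕ) (φ : ℝ → ℂ) (y : ℝ) : ℂ :=
  ((|y| ^ ((1 - (d : ℝ)) / 2) : ℝ) : ℂ) * fourierHat φ y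

/-- Membership in `S̃_d = M_d(I_d)`, viewed as functions on `ℝ ∖ {0}`:
`f` agrees with `M_d(φ)` away from `0` for some `φ ∈ I_d`. -/
def MemStilde (d : ℕ) (f : ℝ → ℂ) : Prop :=
  ∃ φ : ℝ → ℂ, MemI d φ ∧ ∀ y : ℝ, y ≠ 0 → f y = Md d φ y

/-- Decay estimate for elements of `I_d`. -/
lemma MemI.decay (d : ℕ) (φ ψ : ℝ → ℂ)
    (hψeq : ∀ x : ℝ, x ≠ 0 → ψ x = ((x : ℂ) ^ (d + 1))⁻¹ * φ (-1 / x))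
    {M : ℝ} (hM : ∀ x ∈ Icc (-1:ℝ) 1, ‖ψ x‖ ≤ M)
    (u : ℝ) (hu : 1 ≤ |u|) :
    ‖φ u‖ ≤ M / |u| ^ (d+1) := by
  have hu0 : u ≠ 0 := by intro h; simp [h] at hu; linarith
  set x : ℝ := -1 / u with hx
  have hx0 : x ≠ 0 := by simp [hx, hu0]
  have hxu : -1 / x = u := by rw [hx]; field_simp
  have h1 : ψ x = ((x : ℂ) ^ (d + 1))⁻¹ * φ u := by rw [hψeq x hx0, hxu]
  have h2 : φ u = (x : ℂ) ^ (d + 1) * ψ x := by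
    rw [h1, ← mul_assoc, mul_inv_cancel₀ (pow_ne_zero _ (by exact_mod_cast hx0)), one_mul]
  have hxa : |x| = |u|⁻¹ := by rw [hx, abs_div]; simp
  have hmem : x ∈ Icc (-1:ℝ) 1 := by
    have : |x| ≤ 1 := by rw [hxa, inv_le_one_iff₀]; right; linarith
    exact abs_le.mp this
  calc ‖φ u‖ = |x| ^ (d+1) * ‖ψ x‖ := by
        rw [h2, norm_mul, norm_pow, Complex.norm_real, Real.norm_eq_abs]
    _ ≤ |u|⁻¹ ^ (d+1) * M := by
        rw [hxa]
        have h0 : (0:ℝ) ≤ |u|⁻¹ ^ (d+1) := by positivity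
        exact mul_le_mul_of_nonneg_left (hM x hmem) h0
    _ = M / |u| ^ (d+1) := by rw [inv_pow]; ring

/-- Integrability of moments of elements of `I_d`. -/
lemma MemI.integrable_pow_mul (d : ℕ) (hd : 0 < d) (φ : ℝ → ℂ) (h : MemI d φ)
    (n : ℕ) (hn : n ≤ d - 1) :
    Integrable (fun v : ℝ => ‖v‖ ^ n * ‖φ v‖) := by
  obtain ⟨hφ, ψ, hψ, hψeq⟩ := h
  obtain ⟨M, hM⟩ := (isCompact_Icc (a := (-1:ℝ)) (b := 1)).exists_bound_of_continuousOn
    hψ.continuous.continuousOn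
  set F : ℝ → ℝ := fun v => ‖v‖ ^ n * ‖φ v‖ with hF
  have hFc : Continuous F := by
    exact (continuous_norm.pow n).mul hφ.continuous.norm
  set p : ℝ := (n : ℝ) - ((d : ℝ) + 1) with hp
  have hplt : p < -1 := by
    have : (n : ℝ) ≤ (d : ℝ) - 1 := by
      have : (n : ℝ) ≤ ((d - 1 : ℕ) : ℝ) := by exact_mod_cast hn
      rwa [Nat.cast_sub hd, Nat.cast_one] at this
    simp only [hp]; linarith
  have key : ∀ v : ℝ, 1 ≤ |v| → F v ≤ M * |v| ^ p := by
    intro v hv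
    have hv0 : (0:ℝ) < |v| := by linarith
    have hb := MemI.decay d φ ψ hψeq hM v hv
    have h1 : F v ≤ |v| ^ n * (M / |v| ^ (d + 1)) := by
      simp only [hF, Real.norm_eq_abs]
      exact mul_le_mul_of_nonneg_left hb (by positivity)
    have h2 : |v| ^ n * (M / |v| ^ (d + 1)) = M * |v| ^ p := by
      rw [hp, Real.rpow_sub hv0]
      rw [Real.rpow_natCast]
      have : |v| ^ ((d : ℝ) + 1) = |v| ^ (d + 1) := by
        rw [← Real.rpow_natCast |v| (d+1)]; push_cast; ring_nf
      rw [this]; ring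
    linarith
  have hIoi : IntegrableOn (fun x : ℝ => M * x ^ p) (Ioi (1:ℝ)) :=
    (integrableOn_Ioi_rpow_of_lt hplt one_pos).const_mul M
  have hRight : IntegrableOn F (Ici (1:ℝ)) := by
    rw [integrableOn_Ici_iff_integrableOn_Ioi]
    apply Integrable.mono' hIoi hFc.aestronglyMeasurable.restrict
    filter_upwards [ae_restrict_mem measurableSet_Ioi] with v hv
    have hv1 : (1:ℝ) < v := hv
    have habs : |v| = v := abs_of_pos (by linarith)
    rw [Real.norm_eq_abs, abs_of_nonneg]
    · have := key v (by rw [habs]; linarith)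
      rwa [habs] at this
    · simp only [hF]; positivity
  have hLeft : IntegrableOn F (Iic (-1:ℝ)) := by
    rw [← (Measure.measurePreserving_neg (volume : Measure ℝ)).integrableOn_comp_preimage
        (Homeomorph.neg ℝ).measurableEmbedding]
    have hpre : (Neg.neg : ℝ → ℝ) ⁻¹' Iic (-1:ℝ) = Ici (1:ℝ) := by
      ext v; simp [neg_le]
    rw [hpre]
    rw [integrableOn_Ici_iff_integrableOn_Ioi]
    apply Integrable.mono' hIoi
    · exact (hFc.comp continuous_neg).aestronglyMeasurable.restrict
    filter_upwards [ae_restrict_mem measurableSet_Ioi] with v hv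
    have hv1 : (1:ℝ) < v := hv
    have habs : |(-v)| = v := by rw [abs_neg]; exact abs_of_pos (by linarith)
    show ‖F (-v)‖ ≤ M * v ^ p
    rw [Real.norm_eq_abs, abs_of_nonneg]
    · have := key (-v) (by rw [habs]; linarith)
      rwa [habs] at this
    · simp only [hF]; positivity
  have hMid : IntegrableOn F (Icc (-1:ℝ) 1) := hFc.integrableOn_Icc
  rw [← integrableOn_univ]
  have hu : (univ : Set ℝ) ⊆ Iic (-1:ℝ) ∪ (Icc (-1:ℝ) 1 ∪ Ici 1) := by
    intro v _
    rcases le_or_gt v (-1) with h | h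
    · exact Or.inl h
    rcases le_or_gt v 1 with h' | h'
    · exact Or.inr (Or.inl ⟨le_of_lt h, h'⟩)
    · exact Or.inr (Or.inr (le_of_lt h'))
  exact (hLeft.union (hMid.union hRight)).mono_set hu

lemma fourierHat_eq (φ : ℝ → ℂ) :
    fourierHat φ = fun y =>
      (((2 * Real.pi) ^ (-(1 : ℝ) / 2) : ℝ) : ℂ) * (𝓕 φ) (y / (2 * Real.pi)) := by
  funext y
  rw [fourierHat, Real.fourier_real_eq_integral_exp_smul]
  congr 1
  apply integral_congr_ae
  filter_upwards with x
  rw [smul_eq_mul, mul_comm]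
  congr 1
  have hπ : (2 * Real.pi) ≠ 0 := by positivity
  have h1 : -2 * Real.pi * x * (y / (2 * Real.pi)) = -(x * y) := by field_simp
  rw [h1]
  push_cast
  ring_nf

/-- for `f ∈ S̃_d`, the function `y ↦ |y|^{(d-1)/2} f(y)` (for `y ≠ 0`)
extends to a function of class `C^{d-1}` on `ℝ`. -/
theorem Stilde_Cd_minus_one_at_zero (d : ℕ) (hd : 0 < d) (f : ℝ → ℂ)
    (hf : MemStilde d f) :
    ∃ g : ℝ → ℂ, ContDiff ℝ (d - 1 : ℕ) g ∧
      ∀ y : ℝ, y ≠ 0 → g y = ((|y| ^ (((d : ℝ) - 1) / 2) : ℝ) : ℂ) * f y := by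
  obtain ⟨φ, hφI, hfφ⟩ := hf
  refine ⟨fourierHat φ, ?_, ?_⟩
  · rw [fourierHat_eq]
    have hint : ∀ m : ℕ, (m : ℕ∞) ≤ ((d - 1 : ℕ) : ℕ∞) →
        Integrable (fun v : ℝ => ‖v‖ ^ m * ‖φ v‖) := by
      intro m hm
      exact MemI.integrable_pow_mul d hd φ hφI m (by exact_mod_cast hm)
    have hFT : ContDiff ℝ ((d - 1 : ℕ) : ℕ∞) (𝓕 φ) := Real.contDiff_fourier hint
    exact contDiff_const.mul (hFT.comp (contDiff_id.div_const _))
  · intro y hy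
    rw [hfφ y hy, Md, ← mul_assoc, ← Complex.ofReal_mul,
      ← Real.rpow_add (abs_pos.mpr hy)]
    have : ((d : ℝ) - 1) / 2 + (1 - (d : ℝ)) / 2 = 0 := by ring
    rw [this, Real.rpow_zero, Complex.ofReal_one, one_mul]
end
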